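/- Let $\mathcal{C} \subseteq (S^2)^n$ be a vector trifferent code. For $x, y \in \mathcal{C}$ define $A(x,y) = |\{i \in [n] : \langle x_i, y_i \rangle \neq 0\}|$. Then $\sum_{\{x,y\} \in \binom{\mathcal{C}}{2}} 2^{A(x,y)} \le 3^n$. -/

import Mathlib

open scoped RealInnerProductSpace

/-- A vector trifferent code of block length `n`: a finite set of words whose letters are
unit vectors of `ℝ³`, such that any three distinct codewords have a coordinate where the
three letters are mutually orthogonal. -/
def VectorTrifferent (n : ℕ) (C : Finset (Fin n → EuclideanSpace ℝ (Fin 3))) : Prop :=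
  (∀ x ∈ C, ∀ i, ‖x i‖ = 1) ∧
  ∀ x ∈ C, ∀ y ∈ C, ∀ z ∈ C, x ≠ y → x ≠ z → y ≠ z →
    ∃ i, ⟪x i, y i⟫ = 0 ∧ ⟪x i, z i⟫ = 0 ∧ ⟪y i, z i⟫ = 0

/-!
For each unordered pair `{x, y}` of codewords and each set `S` of coordinates where `xᵢ` and
`yᵢ` are not orthogonal, form the product tensor `⊗ᵢ wᵢ ∈ (ℝ³)^⊗n ≅ ℝ^(3^n)`: `wᵢ` is a unit
vector orthogonal to `xᵢ` and `yᵢ` when these are orthogonal, and otherwise one of two fixed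
orthonormal vectors orthogonal to `xᵢ`, the choice recording whether `i ∈ S`. There are
`∑ 2^A(x,y)` such tensors and they are orthonormal, so there are at most `3^n` of them. Two
tensors of the same pair differ at a coordinate of `S ∆ T`. For distinct pairs, some codeword `c`
of the second pair is neither `x` nor `y`; trifference gives a coordinate where `xᵢ, yᵢ, cᵢ` is an
orthonormal basis of `ℝ³`, so the first factor is a multiple of `cᵢ`, while the second factor is
orthogonal to `cᵢ` by construction.
-/

open Finset Module Submodule

theorem Finset.sum_offDiag_eq_two_nsmul_sum_filter {α M : Type*} [DecidableEq α]
    [AddCommMonoid M] (r : α → α → Prop) [IsStrictTotalOrder α r] [DecidableRel r]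
    (s : Finset α) {f : α × α → M} (hf : ∀ a b, f (a, b) = f (b, a)) :
    ∑ p ∈ s.offDiag, f p = 2 • ∑ p ∈ s.offDiag with r p.1 p.2, f p := by
  rw [← sum_filter_add_sum_filter_not s.offDiag fun p => r p.1 p.2, two_nsmul]
  congr 1
  refine sum_nbij' Prod.swap Prod.swap ?_ ?_ (fun _ _ => rfl) (fun _ _ => rfl) fun p _ => hf ..
  · simp only [mem_filter, mem_offDiag]
    rintro ⟨a, b⟩ ⟨⟨ha, hb, hab⟩, h⟩
    exact ⟨⟨hb, ha, Ne.symm hab⟩, ((trichotomous_of r a b).resolve_left h).resolve_left hab⟩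
  · simp only [mem_filter, mem_offDiag]
    rintro ⟨a, b⟩ ⟨⟨ha, hb, hab⟩, h⟩
    exact ⟨⟨hb, ha, Ne.symm hab⟩, asymm h⟩

theorem Sym2.injOn_mk_uncurry_setOf_rel {α : Type*} (r : α → α → Prop) [Std.Asymm r] :
    Set.InjOn Sym2.mk.uncurry {p : α × α | r p.1 p.2} := by
  rintro ⟨a, b⟩ hab ⟨c, d⟩ hcd h
  rcases Sym2.eq_iff.mp h with ⟨rfl, rfl⟩ | ⟨rfl, rfl⟩
  · rfl
  · exact absurd hcd (asymm hab)

section Geometry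

variable {E : Type*} [NormedAddCommGroup E] [InnerProductSpace ℝ E] [FiniteDimensional ℝ E]

theorem exists_norm_eq_one_forall_inner_eq_zero {k : ℕ} (v : Fin k → E)
    (hk : k < finrank ℝ E) : ∃ m : E, ‖m‖ = 1 ∧ ∀ i, ⟪v i, m⟫ = 0 := by
  set K := span ℝ (Set.range v)
  have hK : Kᗮ ≠ ⊥ := by
    intro h
    have hKk : finrank ℝ K ≤ k := (finrank_range_le_card v).trans_eq (Fintype.card_fin k)
    rw [orthogonal_eq_bot_iff.mp h, finrank_top] at hKk
    omega
  obtain ⟨u, hu, hu0⟩ := exists_mem_ne_zero_of_ne_bot hK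
  refine ⟨(‖u‖⁻¹ : ℝ) • u, norm_smul_inv_norm hu0, fun i => ?_⟩
  rw [inner_smul_right, inner_right_of_mem_orthogonal (subset_span (Set.mem_range_self i)) hu,
    mul_zero]

theorem Orthonormal.inner_eq_zero_of_card_eq_finrank {ι : Type*} [Fintype ι] {v : ι → E}
    (hv : Orthonormal ℝ v) (hcard : Fintype.card ι = finrank ℝ E) {m w : E}
    (h : ∀ i, ⟪m, v i⟫ = 0 ∨ ⟪v i, w⟫ = 0) : ⟪m, w⟫ = 0 := by
  let b := OrthonormalBasis.mk hv (hv.linearIndependent.span_eq_top_of_card_eq_finrank' hcard).ge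
  rw [← b.sum_inner_mul_inner]
  refine sum_eq_zero fun i _ => ?_
  rcases h i with h | h <;> simp [b, h]

omit [FiniteDimensional ℝ E] in
theorem orthonormal_three {a b c : E} (ha : ‖a‖ = 1) (hb : ‖b‖ = 1) (hc : ‖c‖ = 1)
    (hab : ⟪a, b⟫ = 0) (hac : ⟪a, c⟫ = 0) (hbc : ⟪b, c⟫ = 0) : Orthonormal ℝ ![a, b, c] := by
  rw [orthonormal_iff_ite]
  intro i j
  fin_cases i <;> fin_cases j <;>
    simp [real_inner_comm, ha, hb, hc, hab, hac, hbc]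

end Geometry

local notation "ℝ³" => EuclideanSpace ℝ (Fin 3)

theorem exists_unitPerp (a b : ℝ³) : ∃ m : ℝ³, ‖m‖ = 1 ∧ ∀ i, ⟪![a, b] i, m⟫ = 0 :=
  exists_norm_eq_one_forall_inner_eq_zero _ (by simp)

noncomputable def unitPerp (a b : ℝ³) : ℝ³ :=
  (exists_unitPerp a b).choose

theorem norm_unitPerp (a b : ℝ³) : ‖unitPerp a b‖ = 1 :=
  (exists_unitPerp a b).choose_spec.1

theorem inner_unitPerp_left (a b : ℝ³) : ⟪a, unitPerp a b⟫ = 0 :=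
  (exists_unitPerp a b).choose_spec.2 0

theorem inner_unitPerp_right (a b : ℝ³) : ⟪b, unitPerp a b⟫ = 0 :=
  (exists_unitPerp a b).choose_spec.2 1

theorem inner_unitPerp_eq_zero {a b c w : ℝ³} (ha : ‖a‖ = 1) (hb : ‖b‖ = 1) (hc : ‖c‖ = 1)
    (hab : ⟪a, b⟫ = 0) (hac : ⟪a, c⟫ = 0) (hbc : ⟪b, c⟫ = 0) (hw : ⟪c, w⟫ = 0) :
    ⟪unitPerp a b, w⟫ = 0 := by
  refine (orthonormal_three ha hb hc hab hac hbc).inner_eq_zero_of_card_eq_finrank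
    (by simp) fun i => ?_
  fin_cases i
  · exact .inl ((real_inner_comm _ _).trans (inner_unitPerp_left a b))
  · exact .inl ((real_inner_comm _ _).trans (inner_unitPerp_right a b))
  · exact .inr hw

noncomputable def tensorFactor (a b : ℝ³) (s : Bool) : ℝ³ :=
  if ⟪a, b⟫ = 0 then unitPerp a b else if s then unitPerp a 0 else unitPerp a (unitPerp a 0)

theorem tensorFactor_of_inner_eq_zero {a b : ℝ³} (h : ⟪a, b⟫ = 0) (s : Bool) :
    tensorFactor a b s = unitPerp a b :=
  if_pos h

theorem norm_tensorFactor (a b : ℝ³) (s : Bool) : ‖tensorFactor a b s‖ = 1 := by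
  unfold tensorFactor
  split_ifs <;> exact norm_unitPerp _ _

theorem inner_tensorFactor_left (a b : ℝ³) (s : Bool) : ⟪a, tensorFactor a b s⟫ = 0 := by
  unfold tensorFactor
  split_ifs <;> exact inner_unitPerp_left _ _

theorem inner_tensorFactor_of_ne {a b : ℝ³} (h : ⟪a, b⟫ ≠ 0) {s t : Bool} (hst : s ≠ t) :
    ⟪tensorFactor a b s, tensorFactor a b t⟫ = 0 := by
  cases s <;> cases t <;> simp_all [tensorFactor, inner_unitPerp_right, real_inner_comm]

section Tensor

variable {ι κ : Type*} [Fintype ι] [DecidableEq ι] [Fintype κ]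

noncomputable def tensorVec (v : ι → EuclideanSpace ℝ κ) : EuclideanSpace ℝ (ι → κ) :=
  WithLp.toLp 2 fun g => ∏ i, v i (g i)

theorem inner_tensorVec (v w : ι → EuclideanSpace ℝ κ) :
    ⟪tensorVec v, tensorVec w⟫ = ∏ i, ⟪v i, w i⟫ := by
  simp only [tensorVec, PiLp.inner_apply, RCLike.inner_apply, conj_trivial,
    ← prod_mul_distrib]
  exact (prod_univ_sum (fun _ => univ) fun i j => w i j * v i j).symm

end Tensor

section Code

variable {ι : Type*} [Fintype ι]

noncomputable def nonorthogonalCoords {E : Type*} [NormedAddCommGroup E]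
    [InnerProductSpace ℝ E] (x y : ι → E) : Finset ι :=
  {i | ⟪x i, y i⟫ ≠ 0}

theorem nonorthogonalCoords_comm {E : Type*} [NormedAddCommGroup E] [InnerProductSpace ℝ E]
    (x y : ι → E) : nonorthogonalCoords x y = nonorthogonalCoords y x := by
  simp only [nonorthogonalCoords, real_inner_comm]

variable [DecidableEq ι]

noncomputable def pairTensor (x y : ι → ℝ³) (S : Finset ι) : EuclideanSpace ℝ (ι → Fin 3) :=
  tensorVec fun i => tensorFactor (x i) (y i) (i ∈ S)

theorem inner_pairTensor_self (x y : ι → ℝ³) (S : Finset ι) :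
    ⟪pairTensor x y S, pairTensor x y S⟫ = 1 := by
  rw [pairTensor, inner_tensorVec]
  exact prod_eq_one fun i _ => by rw [real_inner_self_eq_norm_sq, norm_tensorFactor, one_pow]

theorem inner_pairTensor_of_ne {x y : ι → ℝ³} {S T : Finset ι}
    (hS : S ⊆ nonorthogonalCoords x y) (hT : T ⊆ nonorthogonalCoords x y) (hST : S ≠ T) :
    ⟪pairTensor x y S, pairTensor x y T⟫ = 0 := by
  obtain ⟨i, hi⟩ : ∃ i, ¬(i ∈ S ↔ i ∈ T) := by
    by_contra! h
    exact hST (Finset.ext h)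
  have hxy : ⟪x i, y i⟫ ≠ 0 := by
    by_cases hiS : i ∈ S
    · simpa [nonorthogonalCoords] using hS hiS
    · simpa [nonorthogonalCoords] using hT (by tauto)
  rw [pairTensor, pairTensor, inner_tensorVec]
  exact prod_eq_zero (mem_univ i) (inner_tensorFactor_of_ne hxy (by simpa using hi))

end Code

section Trifferent

variable {n : ℕ} [DecidableEq (Fin n → ℝ³)] {C : Finset (Fin n → ℝ³)}

theorem inner_pairTensor_of_sym2_ne (hC : VectorTrifferent n C) {x y u v : Fin n → ℝ³}
    (hx : x ∈ C) (hy : y ∈ C) (hu : u ∈ C) (hv : v ∈ C) (hxy : x ≠ y) (huv : u ≠ v)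
    (hne : s(x, y) ≠ s(u, v)) (S T : Finset (Fin n)) :
    ⟪pairTensor x y S, pairTensor u v T⟫ = 0 := by
  obtain ⟨c, hc, hcx, hcy, hcT⟩ : ∃ c ∈ C, c ≠ x ∧ c ≠ y ∧ ∀ i, ⟪x i, c i⟫ = 0 →
      ⟪y i, c i⟫ = 0 → ⟪c i, tensorFactor (u i) (v i) (i ∈ T)⟫ = 0 := by
    by_cases hu' : u = x ∨ u = y
    · have hvx : v ≠ x := by rintro rfl; rcases hu' with rfl | rfl <;> simp_all [Sym2.eq_swap]
      have hvy : v ≠ y := by rintro rfl; rcases hu' with rfl | rfl <;> simp_all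
      refine ⟨v, hv, hvx, hvy, fun i hxv hyv => ?_⟩
      have huv_i : ⟪u i, v i⟫ = 0 := by rcases hu' with rfl | rfl <;> assumption
      rw [tensorFactor_of_inner_eq_zero huv_i]
      exact inner_unitPerp_right _ _
    · push Not at hu'
      exact ⟨u, hu, hu'.1, hu'.2, fun i _ _ => inner_tensorFactor_left _ _ _⟩
  obtain ⟨i, hxy_i, hxc, hyc⟩ := hC.2 x hx y hy c hc hxy hcx.symm hcy.symm
  rw [pairTensor, pairTensor, inner_tensorVec]
  refine prod_eq_zero (mem_univ i) ?_
  rw [tensorFactor_of_inner_eq_zero hxy_i]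
  exact inner_unitPerp_eq_zero (hC.1 x hx i) (hC.1 y hy i) (hC.1 c hc i) hxy_i hxc hyc
    (hcT i hxc hyc)

theorem sum_two_pow_card_nonorthogonalCoords_le (hC : VectorTrifferent n C)
    {P : Finset ((Fin n → ℝ³) × (Fin n → ℝ³))} (hPC : P ⊆ C.offDiag)
    (hP : Set.InjOn Sym2.mk.uncurry (P : Set ((Fin n → ℝ³) × (Fin n → ℝ³)))) :
    ∑ p ∈ P, 2 ^ #(nonorthogonalCoords p.1 p.2) ≤ 3 ^ n := by
  let D := P.sigma fun p => (nonorthogonalCoords p.1 p.2).powerset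
  have hD : Orthonormal ℝ fun d : D => pairTensor d.1.1.1 d.1.1.2 d.1.2 := by
    classical
    rw [orthonormal_iff_ite]
    rintro ⟨⟨p, S⟩, hpS⟩ ⟨⟨q, T⟩, hqT⟩
    simp only [D, mem_sigma, mem_powerset] at hpS hqT
    by_cases hpq : p = q
    · subst hpq
      by_cases hST : S = T
      · subst hST
        simpa using inner_pairTensor_self p.1 p.2 S
      · simpa [hST] using inner_pairTensor_of_ne hpS.2 hqT.2 hST
    · have hp := mem_offDiag.mp (hPC hpS.1)
      have hq := mem_offDiag.mp (hPC hqT.1)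
      simpa [hpq] using inner_pairTensor_of_sym2_ne hC hp.1 hp.2.1 hq.1 hq.2.1 hp.2.2 hq.2.2
        (fun h => hpq (hP hpS.1 hqT.1 h)) S T
  calc ∑ p ∈ P, 2 ^ #(nonorthogonalCoords p.1 p.2) = #D := by simp [D, card_sigma]
    _ ≤ finrank ℝ (EuclideanSpace ℝ (Fin n → Fin 3)) := by
      simpa using hD.linearIndependent.fintype_card_le_finrank
    _ = 3 ^ n := by simp

end Trifferent

theorem sum_two_pow_A_le (n : ℕ) [DecidableEq (Fin n → EuclideanSpace ℝ (Fin 3))]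
    (C : Finset (Fin n → EuclideanSpace ℝ (Fin 3)))
    (hC : VectorTrifferent n C) :
    (∑ p ∈ C.offDiag, (2 : ℝ) ^ (Nat.card {i : Fin n // ⟪p.1 i, p.2 i⟫ ≠ 0})) / 2
      ≤ 3 ^ n := by
  classical
  let r : (Fin n → ℝ³) → (Fin n → ℝ³) → Prop := WellOrderingRel
  have hA (x y : Fin n → ℝ³) :
      Nat.card {i : Fin n // ⟪x i, y i⟫ ≠ 0} = #(nonorthogonalCoords x y) := by
    simp [Nat.card_eq_fintype_card, Fintype.card_subtype, nonorthogonalCoords]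
  have key := sum_two_pow_card_nonorthogonalCoords_le hC (filter_subset _ C.offDiag)
    ((Sym2.injOn_mk_uncurry_setOf_rel r).mono fun p hp => (mem_filter.mp hp).2)
  rw [sum_offDiag_eq_two_nsmul_sum_filter r _ fun a b => by rw [hA, hA, nonorthogonalCoords_comm]]
  simp only [hA, nsmul_eq_mul, Nat.cast_ofNat]
  rw [mul_div_cancel_left₀ _ two_ne_zero]
  exact_mod_cast key
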